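/- arXiv:1701.07092 — 2 statements merged into one kernel-verified Lean document; each statement's English description precedes it below -/
import Mathlib

section
/- Let $a,b,c$ be positive integers. Then $\det\left(\binom{b+c}{c+j-i}\right)_{1\le i,j\le a} = \prod_{i=1}^{a}\prod_{j=1}^{b}\prod_{k=1}^{c}\frac{i+j+k-1}{i+j+k-2}$, where the binomial coefficients are taken with the convention that $\binom{n}{k} = 0$ unless $0 \le k \le n$. -/
/-- The binomial coefficient for integer arguments, over ℚ:
`n!/((n-k)! k!)` if `0 ≤ k ≤ n`, and `0` otherwise. -/
noncomputable def ibinom (n k : ℤ) : ℚ :=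
  if 0 ≤ k ∧ k ≤ n then
    (Nat.factorial n.toNat : ℚ) / (Nat.factorial (n - k).toNat * Nat.factorial k.toNat)
  else 0

/-- The entry `A(b,c,i,j)` of the lower-triangular factor. -/
noncomputable def Afun (b c i j : ℕ) : ℚ :=
  if j ≤ i ∧ i ≤ c + j then
    (Nat.factorial c * Nat.factorial (i - 1) * Nat.factorial (b + j - 1) : ℚ) /
      (Nat.factorial (j - 1) * Nat.factorial (b + i - 1) * Nat.factorial (i - j) *
        Nat.factorial (c + j - i))
  else 0

/-- The entry `C(b,c,i,j)` of the upper-triangular factor. -/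
noncomputable def Cfun (b c i j : ℕ) : ℚ :=
  if i ≤ j ∧ j ≤ b + i then
    (Nat.factorial b * Nat.factorial (j - 1) * Nat.factorial (b + c + i - 1) : ℚ) /
      (Nat.factorial (b + i - 1) * Nat.factorial (c + j - 1) * Nat.factorial (j - i) *
        Nat.factorial (b + i - j))
  else 0

/-- The entry `D(i)` (last column of the upper-triangular factor), in the
integer parameters `n, m`. -/
noncomputable def Dfun (b c : ℕ) (n m : ℤ) (i : ℕ) : ℚ :=
  ∑ v ∈ Finset.Icc 1 i, (-1 : ℚ) ^ (i - v) *
    ((Nat.factorial (i - 1) * Nat.factorial (b + v - 1) * Nat.factorial (c + i - v - 1) : ℚ) /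
      (Nat.factorial (c - 1) * Nat.factorial (v - 1) * Nat.factorial (b + i - 1) *
        Nat.factorial (i - v))) * ibinom n (m - v)

/-- The entry `B(j)` (last row of the lower-triangular factor), in the
integer parameters `n', m'`. -/
noncomputable def Bfun (b c : ℕ) (n' m' : ℤ) (j : ℕ) : ℚ :=
  ∑ v ∈ Finset.Icc 1 j, (-1 : ℚ) ^ (j - v) *
    ((Nat.factorial (b + j - 1) * Nat.factorial (c + v - 1) * Nat.factorial (b + j - v - 1) : ℚ) /
      (Nat.factorial (b - 1) * Nat.factorial (v - 1) * Nat.factorial (j - v) *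
        Nat.factorial (b + c + j - 1))) * ibinom n' (v - m')

/-- MacMahon's product formula for the number of rhombus tilings of the
semi-regular hexagon with side lengths `a, b, c`. -/
noncomputable def macmahon (a b c : ℕ) : ℚ :=
  ∏ i ∈ Finset.Icc 1 a, ∏ j ∈ Finset.Icc 1 b, ∏ k ∈ Finset.Icc 1 c,
    (((i : ℚ) + j + k - 1) / ((i : ℚ) + j + k - 2))

/-!
Scaling column `j` by `(c + j)! (b + a - 1 - j)! / (b + c)!` turns the entry into
`y^{\underline i} (N - y)^{\underline{a-1-i}}` at `y = c + j`, where `N = b + c + a - 1`.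
Since `x^{\underline i} z^{\underline{s+1-i}} + x^{\underline{i+1}} z^{\underline{s-i}}
= (x + z - s) x^{\underline i} z^{\underline{s-i}}`, adding row `i + 1` to row `i` for all `i ≤ s`
takes exponent `s + 1` down to `s` at the cost of a factor `(N - s)^(s+1)`. After `a - 1` such steps
only the falling-factorial Vandermonde matrix is left, with determinant `∏_{i<a} i!`. On the other
side, MacMahon's triple product telescopes to `∏_{i<a} i! (b+c+i)! / ((b+i)! (c+i)!)`.
-/

open Finset Matrix Polynomial Nat

section DescPochhammerMatrix

variable {R : Type*} [CommRing R] {n : ℕ}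

/-- The truncated `s - i` makes the rows `i ≥ s` plain falling factorials. -/
noncomputable def descPochhammerMatrix (N : R) (y : Fin n → R) (s : ℕ) :
    Matrix (Fin n) (Fin n) R :=
  of fun i j => (descPochhammer R i).eval (y j) * (descPochhammer R (s - i)).eval (N - y j)

def addNextRowMatrix (s : ℕ) : Matrix (Fin n) (Fin n) R :=
  of fun i j => if j = i then 1 else if (j : ℕ) = i + 1 ∧ (i : ℕ) ≤ s then 1 else 0

theorem det_addNextRowMatrix (s : ℕ) :
    (addNextRowMatrix s : Matrix (Fin n) (Fin n) R).det = 1 := by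
  rw [det_of_isUpperTriangular]
  · simp [addNextRowMatrix]
  · intro i j hji
    have : (j : ℕ) < i := hji
    simp only [addNextRowMatrix, of_apply]
    rw [if_neg (by omega), if_neg (by omega)]

theorem addNextRowMatrix_mul_apply (s : ℕ) (M : Matrix (Fin n) (Fin n) R) (i j : Fin n) :
    ((addNextRowMatrix s : Matrix (Fin n) (Fin n) R) * M) i j =
      M i j + if h : (i : ℕ) + 1 < n ∧ (i : ℕ) ≤ s then M ⟨i + 1, h.1⟩ j else 0 := by
  simp only [mul_apply, addNextRowMatrix, of_apply, ite_mul, one_mul, zero_mul]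
  rw [sum_ite, sum_filter, sum_ite_eq', if_pos (mem_univ _)]
  congr 1
  split_ifs with h
  · refine (sum_eq_single_of_mem ⟨i + 1, h.1⟩ (by simp [Fin.ext_iff]) fun k _ hk => ?_).trans
      ?_
    · rw [if_neg fun hk' => hk (Fin.ext hk'.1)]
    · rw [if_pos ⟨rfl, h.2⟩]
  · refine sum_eq_zero fun k _ => if_neg ?_
    rintro ⟨hk, hi⟩
    exact h ⟨hk ▸ k.2, hi⟩

theorem descPochhammer_eval_mul_add (N x : R) {i s : ℕ} (hi : i ≤ s) :
    (descPochhammer R i).eval x * (descPochhammer R (s + 1 - i)).eval (N - x) +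
        (descPochhammer R (i + 1)).eval x * (descPochhammer R (s - i)).eval (N - x) =
      (N - s) * ((descPochhammer R i).eval x * (descPochhammer R (s - i)).eval (N - x)) := by
  rw [Nat.sub_add_comm hi, descPochhammer_succ_eval, descPochhammer_succ_eval, Nat.cast_sub hi]
  ring

variable (N : R) (y : Fin n → R)

theorem det_descPochhammerMatrix_succ {s : ℕ} (hs : s + 1 < n) :
    (descPochhammerMatrix N y (s + 1)).det =
      (N - s) ^ (s + 1) * (descPochhammerMatrix N y s).det := by
  have hrows : addNextRowMatrix s * descPochhammerMatrix N y (s + 1) =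
      of fun (i j : Fin n) =>
        (if (i : ℕ) ≤ s then N - s else 1) * descPochhammerMatrix N y s i j := by
    ext i j
    rw [addNextRowMatrix_mul_apply, of_apply]
    by_cases hi : (i : ℕ) ≤ s
    · rw [dif_pos ⟨by omega, hi⟩, if_pos hi]
      simp only [descPochhammerMatrix, of_apply]
      rw [Nat.add_sub_add_right]
      exact descPochhammer_eval_mul_add N (y j) hi
    · rw [dif_neg (by omega), if_neg hi, add_zero, one_mul]
      simp only [descPochhammerMatrix, of_apply]
      rw [Nat.sub_eq_zero_of_le (by omega), Nat.sub_eq_zero_of_le (by omega)]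
  have hscale : ∏ i : Fin n, (if (i : ℕ) ≤ s then N - s else 1) = (N - s) ^ (s + 1) := by
    rw [Fin.prod_univ_eq_prod_range (fun i => if i ≤ s then N - s else 1), prod_ite,
      prod_const_one, mul_one, prod_const]
    congr
    rw [show (range n).filter (· ≤ s) = range (s + 1) by ext; simp; omega, card_range]
  calc (descPochhammerMatrix N y (s + 1)).det
      = (addNextRowMatrix s * descPochhammerMatrix N y (s + 1)).det := by
        rw [det_mul, det_addNextRowMatrix, one_mul]
    _ = (N - s) ^ (s + 1) * (descPochhammerMatrix N y s).det := by
        rw [hrows, det_mul_column, hscale]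

theorem det_descPochhammerMatrix_of_le {s : ℕ} (hs : s ≤ n - 1) :
    (descPochhammerMatrix N y s).det =
      (∏ t ∈ range s, (N - t) ^ (t + 1)) * (descPochhammerMatrix N y 0).det := by
  induction s with
  | zero => simp
  | succ s ih =>
    rw [det_descPochhammerMatrix_succ N y (by omega), ih (by omega), prod_range_succ]
    ring

theorem descPochhammerMatrix_zero :
    descPochhammerMatrix N y 0 = (of fun (i j : Fin n) => (descPochhammer R j).eval (y i))ᵀ := by
  ext
  simp [descPochhammerMatrix]

theorem det_descPochhammerMatrix [IsDomain R] :
    (descPochhammerMatrix N y (n - 1)).det =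
      (∏ t ∈ range (n - 1), (N - t) ^ (t + 1)) * (vandermonde y).det := by
  rw [det_descPochhammerMatrix_of_le N y le_rfl, descPochhammerMatrix_zero, det_transpose,
    det_eval_matrixOfPolynomials_eq_det_vandermonde y _ (fun i => descPochhammer_natDegree R i)
      (fun i => monic_descPochhammer R i)]

end DescPochhammerMatrix

theorem ibinom_natCast (n k : ℕ) : ibinom n k = n.choose k := by
  unfold ibinom
  by_cases hk : k ≤ n
  · rw [if_pos ⟨by positivity, by exact_mod_cast hk⟩, Nat.cast_choose ℚ hk,
      show ((n : ℤ) - k).toNat = n - k by omega, Int.toNat_natCast, Int.toNat_natCast, mul_comm]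
  · rw [if_neg (by omega), Nat.choose_eq_zero_of_lt (by omega), Nat.cast_zero]

theorem ibinom_of_neg (n : ℤ) {k : ℤ} (hk : k < 0) : ibinom n k = 0 :=
  if_neg (by omega)

theorem Nat.choose_sub_mul_factorial_mul_factorial {n y z i l : ℕ} (hi : i ≤ y)
    (h : y + z = n + i + l) :
    n.choose (y - i) * y ! * z ! = n ! * y.descFactorial i * z.descFactorial l := by
  by_cases hl : l ≤ z
  · rw [← factorial_mul_descFactorial hi, ← factorial_mul_descFactorial hl,
      ← choose_mul_factorial_mul_factorial (show y - i ≤ n by omega),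
      show n - (y - i) = z - l by omega]
    ring
  · rw [choose_eq_zero_of_lt (show n < y - i by omega),
      descFactorial_eq_zero_iff_lt.mpr (show z < l by omega)]
    simp

theorem Nat.factorial_pow_mul_prod_pow_eq_prod_factorial (M m : ℕ) :
    M ! ^ (m + 1) * ∏ t ∈ range m, (M + m - t) ^ (t + 1) =
      ∏ i ∈ range (m + 1), (M + i)! := by
  induction m with
  | zero => simp
  | succ m ih =>
    have hfall : M ! * ∏ t ∈ range (m + 1), (M + (m + 1) - t) = (M + (m + 1))! := by
      rw [← descFactorial_eq_prod_range,
        ← factorial_mul_descFactorial (by omega : m + 1 ≤ M + (m + 1)), Nat.add_sub_cancel]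
    rw [prod_range_succ _ (m + 1), ← ih, ← hfall, prod_range_succ', prod_range_succ' _ m]
    simp only [show ∀ k, M + (m + 1) - (k + 1) = M + m - k from fun k => by omega, pow_succ,
      prod_mul_distrib]
    ring

theorem prod_Icc_one_eq_prod_range {M : Type*} [CommMonoid M] (f : ℕ → M) (n : ℕ) :
    ∏ i ∈ Icc 1 n, f i = ∏ i ∈ range n, f (i + 1) := by
  rw [← Ico_add_one_right_eq_Icc, prod_Ico_eq_prod_range, Nat.add_sub_cancel]
  simp only [add_comm]

theorem prod_range_add_two_div_add_one {u : ℚ} (hu : 0 ≤ u) (c : ℕ) :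
    ∏ k ∈ range c, (u + k + 2) / (u + k + 1) = (u + c + 1) / (u + 1) := by
  induction c with
  | zero => simp [div_self (by positivity : u + 1 ≠ 0)]
  | succ c ih =>
    rw [prod_range_succ, ih]
    field_simp
    push_cast
    ring

theorem macmahon_eq_prod_ascFactorial (a b c : ℕ) :
    macmahon a b c =
      ∏ i ∈ range a, ((i + c + 1).ascFactorial b : ℚ) / (i + 1).ascFactorial b := by
  simp only [macmahon, prod_Icc_one_eq_prod_range, ascFactorial_eq_prod_range]
  refine prod_congr rfl fun i _ => ?_
  push_cast
  rw [← prod_div_distrib]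
  refine prod_congr rfl fun j _ => ?_
  have hu : (0 : ℚ) ≤ i + j := by positivity
  convert prod_range_add_two_div_add_one hu c using 1
  · exact prod_congr rfl fun k _ => by ring_nf
  · ring_nf

theorem macmahon_mul_prod_factorial (a b c : ℕ) :
    macmahon a b c * ∏ i ∈ range a, ((b + i)! * (c + i)! : ℚ) =
      ∏ i ∈ range a, (i ! * (b + c + i)! : ℚ) := by
  rw [macmahon_eq_prod_ascFactorial, ← prod_mul_distrib]
  refine prod_congr rfl fun i _ => ?_
  have hc : ((c + i)! : ℚ) * (i + c + 1).ascFactorial b = (b + c + i)! := by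
    rw [show i + c + 1 = c + i + 1 by ring, show b + c + i = c + i + b by ring]
    exact_mod_cast factorial_mul_ascFactorial (c + i) b
  have hb : (i ! : ℚ) * (i + 1).ascFactorial b = (b + i)! := by
    rw [add_comm b]
    exact_mod_cast factorial_mul_ascFactorial i b
  have hpos : ((i + 1).ascFactorial b : ℚ) ≠ 0 := by positivity
  rw [← hc, ← hb]
  field_simp

theorem factorial_mul_factorial_mul_ibinom (b c m : ℕ) (i j : Fin (m + 1)) :
    ((c + j)! * (b + (m - j))! : ℚ) *
        ibinom ((b : ℤ) + c) ((c : ℤ) + ((j : ℕ) + 1) - ((i : ℕ) + 1)) =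
      (b + c)! *
        descPochhammerMatrix ((b + c + m : ℕ) : ℚ) (fun j => ((c + j : ℕ) : ℚ)) m i j := by
  have hj := j.is_le
  have hN : ((b + c + m : ℕ) : ℚ) - ((c + j : ℕ) : ℚ) = ((b + (m - j) : ℕ) : ℚ) := by
    push_cast [Nat.cast_sub hj]
    ring
  simp only [descPochhammerMatrix, of_apply, hN, descPochhammer_eval_eq_descFactorial]
  by_cases hi : (i : ℕ) ≤ c + j
  · rw [show (c : ℤ) + ((j : ℕ) + 1) - ((i : ℕ) + 1) = ((c + j - i : ℕ) : ℤ) by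
        push_cast [hi]; ring,
      show (b : ℤ) + c = ((b + c : ℕ) : ℤ) by push_cast; ring, ibinom_natCast]
    have key := choose_sub_mul_factorial_mul_factorial (n := b + c) (z := b + (m - j)) (l := m - i)
      hi (by have := i.is_le; omega)
    rw [mul_comm, ← mul_assoc, ← mul_assoc]
    exact_mod_cast key
  · rw [ibinom_of_neg _ (by omega), descFactorial_eq_zero_iff_lt.mpr (by omega)]
    simp

theorem det_descPochhammerMatrix_natCast (b c m : ℕ) :
    (descPochhammerMatrix ((b + c + m : ℕ) : ℚ) (fun j : Fin (m + 1) => ((c + j : ℕ) : ℚ))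
        m).det =
      (((∏ t ∈ range m, (b + c + m - t) ^ (t + 1)) * m.superFactorial : ℕ) : ℚ) := by
  have hy : vandermonde (fun j : Fin (m + 1) => ((c + j : ℕ) : ℚ)) =
      vandermonde fun j => (j : ℚ) + c := by
    ext i j
    simp [add_comm]
  have h :=
    det_descPochhammerMatrix ((b + c + m : ℕ) : ℚ) fun j : Fin (m + 1) => ((c + j : ℕ) : ℚ)
  rw [Nat.add_sub_cancel, hy, det_vandermonde_add, det_vandermonde_id_eq_superFactorial] at h
  rw [h, Nat.cast_mul, Nat.cast_prod]
  congr 1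
  refine prod_congr rfl fun t ht => ?_
  rw [Nat.cast_pow, Nat.cast_sub (by simp at ht; omega)]

theorem prod_factorial_mul_det_ibinom (a b c : ℕ) :
    (∏ i ∈ range a, ((b + i)! * (c + i)! : ℚ)) *
        (of fun i j : Fin a =>
          ibinom ((b : ℤ) + c) ((c : ℤ) + ((j : ℕ) + 1) - ((i : ℕ) + 1))).det =
      ∏ i ∈ range a, (i ! * (b + c + i)! : ℚ) := by
  obtain _ | m := a
  · simp
  have hcols : ∏ j : Fin (m + 1), ((c + j)! * (b + (m - j))! : ℚ) =
      ∏ i ∈ range (m + 1), ((b + i)! * (c + i)! : ℚ) := by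
    rw [Fin.prod_univ_eq_prod_range (fun j => ((c + j)! * (b + (m - j))! : ℚ)), prod_mul_distrib,
      prod_mul_distrib, mul_comm]
    congr 1
    exact prod_range_reflect (fun j => ((b + j)! : ℚ)) (m + 1)
  have hnat :
      (b + c)! ^ (m + 1) * ((∏ t ∈ range m, (b + c + m - t) ^ (t + 1)) * m.superFactorial) =
      ∏ i ∈ range (m + 1), i ! * (b + c + i)! := by
    rw [prod_mul_distrib, ← prod_range_succ_factorial,
      ← factorial_pow_mul_prod_pow_eq_prod_factorial]
    ring
  rw [← hcols, ← det_mul_row]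
  simp_rw [of_apply, factorial_mul_factorial_mul_ibinom]
  rw [det_mul_row (fun _ => ((b + c)! : ℚ)), prod_const, Finset.card_fin,
    det_descPochhammerMatrix_natCast]
  exact_mod_cast hnat

theorem statement_7_general (a b c : ℕ) :
    (Matrix.of fun i j : Fin a =>
        ibinom ((b : ℤ) + c) ((c : ℤ) + ((j : ℕ) + 1) - ((i : ℕ) + 1))).det
      = macmahon a b c := by
  have hfact : (∏ i ∈ range a, ((b + i)! * (c + i)! : ℚ)) ≠ 0 := by positivity
  apply mul_left_cancel₀ hfact
  rw [prod_factorial_mul_det_ibinom, mul_comm, macmahon_mul_prod_factorial]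

/-- `det (binom(b+c, c+j-i))_{1 ≤ i,j ≤ a}` equals
MacMahon's product formula. -/
theorem statement_7 (a b c : ℕ) (ha : 0 < a) (hb : 0 < b) (hc : 0 < c) :
    (Matrix.of fun i j : Fin a =>
        ibinom ((b : ℤ) + c) ((c : ℤ) + ((j : ℕ) + 1) - ((i : ℕ) + 1))).det
      = macmahon a b c :=
  statement_7_general a b c
end

section
/- Let $a,b,c$ be positive integers and $m,n,m',n'$ arbitrary integers, and let $P$ be the $(a+1)\times(a+1)$ matrix over $\mathbb{Q}$ with entries $P_{i,j} = \binom{b+c}{c+j-i}$ for $1\le i,j\le a$; $P_{i,a+1} = \binom{n}{m-i}$ for $1\le i\le a$; $P_{a+1,j} = \binom{n'}{j-m'}$ for $1\le j\le a$; $P_{a+1,a+1} = \binom{n+n'-b-c}{m-m'-c}$. Define $G(t) := \sum_{s=1}^{t} (-1)^{t-s}\binom{b+s-1}{s-1}\binom{c+t-s-1}{c-1}\binom{n}{m-s}$ and $H(t) := \sum_{s=1}^{t} (-1)^{t-s}\binom{c+s-1}{s-1}\binom{b+t-s-1}{b-1}\binom{n'}{s-m'}$. Then $\det(P) = \left(\prod_{i=1}^{a}\prod_{j=1}^{b}\prod_{k=1}^{c}\frac{i+j+k-1}{i+j+k-2}\right)\cdot\left(\binom{n+n'-b-c}{m-m'-c}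 - \sum_{t=1}^{a}\frac{G(t)\cdot H(t)}{\binom{b+c+t-1}{b+t-1}\binom{b+t-1}{t-1}}\right)$. -/
/-- The paper's function `g(a,b,c,l_x,l_y,t)` in the integer parameters
`m = (a+c+1)/2 + l_x`, `n = (b+c)/2 + l_x + l_y`. -/
noncomputable def Gfun (b c : ℕ) (n m : ℤ) (t : ℕ) : ℚ :=
  ∑ s ∈ Finset.Icc 1 t,
    (-1 : ℚ) ^ (t - s) * ((b + s - 1).choose (s - 1) : ℚ) *
      ((c + t - s - 1).choose (c - 1) : ℚ) * ibinom n (m - s)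

/-- The paper's function `g(a,c,b,-r_y,-r_x,t)` in the integer parameters
`m' = (a-c+1)/2 + r_x`, `n' = (b+c)/2 - r_x - r_y`. -/
noncomputable def Hfun (b c : ℕ) (n' m' : ℤ) (t : ℕ) : ℚ :=
  ∑ s ∈ Finset.Icc 1 t,
    (-1 : ℚ) ^ (t - s) * ((c + s - 1).choose (s - 1) : ℚ) *
      ((b + t - s - 1).choose (b - 1) : ℚ) * ibinom n' ((s : ℤ) - m')

/-!
`P = L * U`, where `L` is lower unitriangular with entries `Afun` and bottom row `Bfun`, and `U`
is upper triangular with entries `Cfun`, last column `Dfun` and corner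
`ibinom (n + n' - b - c) (m - m' - c) - ∑ t, Bfun t * Dfun t`. The top-left block of `L * U` is
the binomial block by a Vandermonde-type convolution. The matrix `Ainv` is the inverse of `A`
(Chu–Vandermonde at a negative upper index), and `D = Ainv * (last column of P)`; since
`C = diag(C) * Aᵀ` with `b` and `c` swapped, the same inversion gives `B * C = (last row of P)`.
So `det P` is the product of the diagonal of `C`, which telescopes to MacMahon's product, times
the corner, and `G`, `H` are `D`, `B` rescaled by binomial coefficients.
-/

open Finset
open scoped Nat

@[to_additive]
theorem prod_fin_eq_prod_Icc {M : Type*} [CommMonoid M] (a : ℕ) (f : ℕ → M) :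
    ∏ k : Fin a, f (k + 1) = ∏ k ∈ Icc 1 a, f k := by
  rw [Fin.prod_univ_eq_prod_range (fun k => f (k + 1)), range_eq_Ico, prod_Ico_add', zero_add,
    Ico_add_one_right_eq_Icc]

theorem prod_Icc_div_pred_eq {K : Type*} [Field K] (f : ℕ → K) (hf : ∀ k, f k ≠ 0)
    (n : ℕ) :
    ∏ k ∈ Icc 1 n, f k / f (k - 1) = f n / f 0 := by
  induction n with
  | zero => simp [hf]
  | succ n ih =>
    rw [prod_Icc_succ_top (by omega), ih, Nat.add_sub_cancel]
    field_simp [hf]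

section Bordered

variable {R : Type*} [CommRing R]

/-- `M`, `col` and `row` are indexed from `1`, like the matrix in the theorem. -/
def borderedMatrix (a : ℕ) (M : ℕ → ℕ → R) (col row : ℕ → R) (corner : R) :
    Matrix (Fin (a + 1)) (Fin (a + 1)) R :=
  Matrix.of fun i j =>
    if (i : ℕ) < a then if (j : ℕ) < a then M (i + 1) (j + 1) else col (i + 1)
    else if (j : ℕ) < a then row (j + 1) else corner

theorem borderedMatrix_mul_borderedMatrix (a : ℕ) (L U : ℕ → ℕ → R) (B D : ℕ → R)
    (y : R) :
    borderedMatrix a L 0 B 1 * borderedMatrix a U D 0 y =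
      borderedMatrix a (fun i j => ∑ k ∈ Icc 1 a, L i k * U k j)
        (fun i => ∑ k ∈ Icc 1 a, L i k * D k) (fun j => ∑ k ∈ Icc 1 a, B k * U k j)
        (∑ k ∈ Icc 1 a, B k * D k + y) := by
  ext i j
  simp only [Matrix.mul_apply, Fin.sum_univ_castSucc, borderedMatrix, Matrix.of_apply,
    Fin.val_castSucc, Fin.is_lt, if_true, Fin.val_last, lt_irrefl, if_false,
    ← sum_fin_eq_sum_Icc]
  split_ifs <;> simp

theorem det_borderedMatrix_lower (a : ℕ) (L : ℕ → ℕ → R) (B : ℕ → R)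
    (hL : ∀ i j, i < j → L i j = 0) (hdiag : ∀ i, L i i = 1) :
    (borderedMatrix a L 0 B 1).det = 1 := by
  rw [Matrix.det_of_isLowerTriangular _ fun i j (hij : i < j) => ?_]
  · refine prod_eq_one fun i _ => ?_
    simp only [borderedMatrix, Matrix.of_apply]
    split_ifs <;> simp [hdiag]
  · simp only [borderedMatrix, Matrix.of_apply]
    have : (i : ℕ) < j := hij
    split_ifs <;> first | omega | simp [hL _ _ (by omega : (i : ℕ) + 1 < j + 1)]

theorem det_borderedMatrix_upper (a : ℕ) (U : ℕ → ℕ → R) (D : ℕ → R) (y : R)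
    (hU : ∀ i j, j < i → U i j = 0) :
    (borderedMatrix a U D 0 y).det = (∏ k ∈ Icc 1 a, U k k) * y := by
  rw [Matrix.det_of_isUpperTriangular fun i j (hij : j < i) => ?_]
  · simp only [Fin.prod_univ_castSucc, borderedMatrix, Matrix.of_apply, Fin.val_castSucc,
      Fin.is_lt, if_true, Fin.val_last, lt_irrefl, if_false, ← prod_fin_eq_prod_Icc]
  · simp only [borderedMatrix, Matrix.of_apply]
    have : (j : ℕ) < i := hij
    split_ifs <;> first | omega | simp [hU _ _ (by omega : (j : ℕ) + 1 < i + 1)]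

end Bordered

theorem sum_range_neg_one_pow_mul_add_choose_mul_choose (c N : ℕ) :
    ∑ j ∈ range (N + 1), (-1 : ℚ) ^ j * (c + j).choose j * (c + 1).choose (N - j) =
      if N = 0 then 1 else 0 := by
  -- Chu–Vandermonde for `(-(c + 1)) + (c + 1) = 0` in the binomial ring `ℤ`
  have key := Ring.add_choose_eq (r := -((c + 1 : ℕ) : ℤ)) (s := ((c + 1 : ℕ) : ℤ)) N
    (Commute.all _ _)
  rw [neg_add_cancel, Ring.choose_zero_ite, Finset.Nat.sum_antidiagonal_eq_sum_range_succ_mk] at key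
  have hneg (j : ℕ) :
      Ring.choose (-((c + 1 : ℕ) : ℤ)) j = (-1) ^ j * ((c + j).choose j : ℤ) := by
    rw [Ring.choose_neg,
      show ((c + 1 : ℕ) : ℤ) + j - 1 = ((c + j : ℕ) : ℤ) by push_cast; ring, Ring.choose_natCast,
      Units.smul_def, Int.coe_negOnePow_natCast, smul_eq_mul]
  simp only [hneg, Ring.choose_natCast] at key
  exact_mod_cast key.symm

/-- The guard `v ≤ q` restores the vanishing of `b.choose (q - v)` for `v > q`, which truncated
subtraction would lose. -/
def tripleChooseSum (b c p q : ℕ) : ℕ :=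
  ∑ v ∈ range (p + 1),
    if v ≤ q then (b + c + v).choose v * c.choose (p - v) * b.choose (q - v) else 0

theorem tripleChooseSum_zero_left (c p q : ℕ) :
    tripleChooseSum 0 c p q = p.choose q * (c + q).choose p := by
  unfold tripleChooseSum
  by_cases hqp : q ≤ p
  · rw [sum_eq_single_of_mem q (by simp only [mem_range]; omega)]
    · rw [if_pos le_rfl, Nat.sub_self, Nat.choose_zero_right, mul_one, zero_add,
        mul_comm (p.choose q), Nat.choose_mul hqp, Nat.add_sub_cancel, mul_comm]
    · intro v _ hv
      split_ifs
      · rw [Nat.choose_eq_zero_of_lt (by omega : 0 < q - v), mul_zero]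
      · rfl
  · rw [sum_eq_zero, Nat.choose_eq_zero_of_lt (by omega : p < q), zero_mul]
    intro v hv
    split_ifs
    · rw [Nat.choose_eq_zero_of_lt (by simp only [mem_range] at hv; omega : 0 < q - v), mul_zero]
    · rfl

theorem tripleChooseSum_succ_succ_succ (b c p q : ℕ) :
    tripleChooseSum (b + 1) c (p + 1) (q + 1) =
      tripleChooseSum b c (p + 1) (q + 1) + tripleChooseSum b c (p + 1) q +
        tripleChooseSum (b + 1) c p q := by
  have hshift : tripleChooseSum (b + 1) c p q =
      ∑ v ∈ range (p + 2), if 1 ≤ v ∧ v ≤ q + 1 then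
        (b + c + v).choose (v - 1) * c.choose (p + 1 - v) * (b + 1).choose (q + 1 - v) else 0 := by
    rw [sum_range_succ' _ (p + 1), if_neg (by omega), add_zero]
    refine sum_congr rfl fun w _ => ?_
    simp only [Nat.add_sub_cancel, Nat.reduceSubDiff, le_add_iff_nonneg_left, zero_le,
      true_and, Nat.add_le_add_iff_right, show b + c + (w + 1) = b + 1 + c + w by ring]
  rw [hshift, tripleChooseSum, tripleChooseSum, tripleChooseSum, ← sum_add_distrib,
    ← sum_add_distrib]
  refine sum_congr rfl fun v _ => ?_
  rcases v with _ | w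
  · simp only [le_add_iff_nonneg_left, zero_le, ↓reduceIte, add_zero, Nat.choose_zero_right,
      tsub_zero, one_mul, Nat.choose_succ_succ' b q, nonpos_iff_eq_zero, one_ne_zero, and_true]
    ring
  rw [show b + 1 + c + (w + 1) = b + c + (w + 1) + 1 by ring, Nat.choose_succ_succ',
    Nat.add_sub_cancel]
  by_cases hwq : w < q
  · rw [if_pos (by omega), if_pos (by omega), if_pos (by omega), if_pos (by omega),
      show q + 1 - (w + 1) = q - (w + 1) + 1 by omega, Nat.choose_succ_succ' b]
    ring
  by_cases hwq' : w = q
  · subst hwq'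
    rw [if_pos le_rfl, if_pos le_rfl, if_neg (by omega), if_pos (by omega), Nat.sub_self,
      Nat.choose_zero_right, Nat.choose_zero_right]
    ring
  · simp only [if_neg (by omega : ¬ w + 1 ≤ q + 1), if_neg (by omega : ¬ w + 1 ≤ q),
      if_neg (by omega : ¬ (1 ≤ w + 1 ∧ w + 1 ≤ q + 1)), add_zero]

theorem tripleChooseSum_eq (b c p q : ℕ) :
    tripleChooseSum b c p q = (b + p).choose q * (c + q).choose p := by
  induction b generalizing p q with
  | zero => rw [tripleChooseSum_zero_left, zero_add]
  | succ b ihb =>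
    induction p generalizing q with
    | zero => simp [tripleChooseSum]
    | succ p ihp =>
      cases q with
      | zero =>
        rw [tripleChooseSum, sum_eq_single_of_mem 0 (by simp)]
        · simp
        · intro v _ hv
          rw [if_neg (by omega)]
      | succ q =>
        rw [tripleChooseSum_succ_succ_succ, ihb, ihb, ihp,
          show b + 1 + (p + 1) = b + p + 1 + 1 by ring, show c + (q + 1) = c + q + 1 by ring,
          Nat.choose_succ_succ' (b + p + 1), Nat.choose_succ_succ' (c + q),
          show b + (p + 1) = b + p + 1 by ring, show b + 1 + p = b + p + 1 by ring]
        ring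

section Factors

variable (b c : ℕ)

theorem Afun_of_lt {i j : ℕ} (h : i < j) : Afun b c i j = 0 := by
  rw [Afun, if_neg (by omega)]

theorem Cfun_of_lt {i j : ℕ} (h : j < i) : Cfun b c i j = 0 := by
  rw [Cfun, if_neg (by omega)]

theorem Afun_self (i : ℕ) : Afun b c i i = 1 := by
  rw [Afun, if_pos ⟨le_rfl, by omega⟩, Nat.sub_self, Nat.add_sub_cancel, Nat.factorial_zero,
    Nat.cast_one]
  field_simp

theorem Afun_eq_choose_mul {i j : ℕ} (hji : j ≤ i) :
    Afun b c i j = c.choose (i - j) *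
      ((i - 1)! * (b + j - 1)! / ((j - 1)! * (b + i - 1)!) : ℚ) := by
  by_cases h : i ≤ c + j
  · rw [Afun, if_pos ⟨hji, h⟩, Nat.cast_choose ℚ (by omega : i - j ≤ c),
      show c - (i - j) = c + j - i by omega]
    field_simp
  · rw [Afun, if_neg (by omega), Nat.choose_eq_zero_of_lt (by omega), Nat.cast_zero, zero_mul]

theorem Cfun_self (k : ℕ) :
    Cfun b c k k = ((k - 1)! * (b + c + k - 1)! / ((b + k - 1)! * (c + k - 1)!) : ℚ) := by
  rw [Cfun, if_pos ⟨le_rfl, by omega⟩, Nat.sub_self, Nat.add_sub_cancel, Nat.factorial_zero,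
    Nat.cast_one]
  field_simp

theorem Cfun_self_ne_zero (k : ℕ) : Cfun b c k k ≠ 0 := by
  rw [Cfun_self]
  positivity

theorem Cfun_eq_Cfun_self_mul_Afun (i j : ℕ) : Cfun b c i j = Cfun b c i i * Afun c b j i := by
  rw [Cfun_self]
  by_cases h : i ≤ j ∧ j ≤ b + i
  · rw [Cfun, Afun, if_pos h, if_pos h]
    field_simp
  · rw [Cfun, Afun, if_neg h, if_neg h, mul_zero]

end Factors

def Ainv (b c k v : ℕ) : ℚ :=
  (-1 : ℚ) ^ (k - v) *
    ((Nat.factorial (k - 1) * Nat.factorial (b + v - 1) * Nat.factorial (c + k - v - 1) : ℚ) /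
      (Nat.factorial (c - 1) * Nat.factorial (v - 1) * Nat.factorial (b + k - 1) *
        Nat.factorial (k - v)))

section LU

variable {b c : ℕ}

theorem Afun_mul_Cfun {i j k : ℕ} (hk : 1 ≤ k) (hki : k ≤ i) (hkj : k ≤ j) :
    Afun b c i k * Cfun b c k j =
      ((b + c)! * (i - 1)! * (j - 1)! / ((b + i - 1)! * (c + j - 1)!) : ℚ) *
        ((b + c + (k - 1)).choose (b + c) * c.choose (i - k) * b.choose (j - k) : ℕ) := by
  rw [Cfun_eq_Cfun_self_mul_Afun, Afun_eq_choose_mul b c hki, Afun_eq_choose_mul c b hkj,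
    Cfun_self, Nat.cast_mul, Nat.cast_mul, Nat.cast_add_choose,
    show b + c + (k - 1) = b + c + k - 1 by omega]
  field_simp

theorem sum_Afun_mul_Cfun {a i j : ℕ} (hi : 1 ≤ i) (hia : i ≤ a) (hj : 1 ≤ j) :
    ∑ k ∈ Icc 1 a, Afun b c i k * Cfun b c k j = ibinom (b + c) (c + j - i) := by
  set κ : ℚ := (b + c)! * (i - 1)! * (j - 1)! / ((b + i - 1)! * (c + j - 1)!) with hκ
  calc ∑ k ∈ Icc 1 a, Afun b c i k * Cfun b c k j
      = ∑ k ∈ Icc 1 i, Afun b c i k * Cfun b c k j := by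
        refine (sum_subset (Icc_subset_Icc_right hia) fun k hk hki => ?_).symm
        rw [Afun_of_lt b c (by simp only [mem_Icc] at hk hki; omega), zero_mul]
    _ = ∑ v ∈ range i, Afun b c i (v + 1) * Cfun b c (v + 1) j := by
        rw [range_eq_Ico, sum_Ico_add' (fun k => Afun b c i k * Cfun b c k j), zero_add,
          Ico_add_one_right_eq_Icc]
    _ = κ * tripleChooseSum b c (i - 1) (j - 1) := by
        rw [tripleChooseSum, Nat.sub_add_cancel hi, Nat.cast_sum, mul_sum]
        refine sum_congr rfl fun v hv => ?_
        split_ifs with hvj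
        · rw [Afun_mul_Cfun (by omega) (by simp only [mem_range] at hv; omega) (by omega),
            Nat.add_sub_cancel, Nat.choose_symm_add, show i - 1 - v = i - (v + 1) by omega,
            show j - 1 - v = j - (v + 1) by omega]
        · rw [Cfun_of_lt b c (by omega), mul_zero, Nat.cast_zero, mul_zero]
    _ = ibinom (b + c) (c + j - i) := by
        rw [tripleChooseSum_eq, show b + (i - 1) = b + i - 1 by omega,
          show c + (j - 1) = c + j - 1 by omega]
        by_cases hji : j ≤ b + i
        · by_cases hij : i ≤ c + j
          · rw [ibinom, if_pos (by omega), show ((b : ℤ) + c).toNat = b + c by omega,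
              show ((b : ℤ) + c - (c + j - i)).toNat = b + i - j by omega,
              show ((c : ℤ) + j - i).toNat = c + j - i by omega,
              Nat.cast_mul, Nat.cast_choose ℚ (by omega : j - 1 ≤ b + i - 1),
              Nat.cast_choose ℚ (by omega : i - 1 ≤ c + j - 1),
              show b + i - 1 - (j - 1) = b + i - j by omega,
              show c + j - 1 - (i - 1) = c + j - i by omega, hκ]
            field_simp
          · rw [ibinom, if_neg (by omega), Nat.choose_eq_zero_of_lt (by omega : c + j - 1 < i - 1),
              mul_zero, Nat.cast_zero, mul_zero]
        · rw [ibinom, if_neg (by omega), Nat.choose_eq_zero_of_lt (by omega : b + i - 1 < j - 1),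
            zero_mul, Nat.cast_zero, mul_zero]

theorem Afun_mul_Ainv (hc : 0 < c) {i k v : ℕ} (hvk : v ≤ k) (hki : k ≤ i) :
    Afun b c i k * Ainv b c k v =
      ((i - 1)! * (b + v - 1)! / ((b + i - 1)! * (v - 1)!) : ℚ) *
        ((-1) ^ (k - v) * ((c - 1 + (k - v)).choose (k - v) : ℚ) * (c.choose (i - k) : ℚ)) := by
  rw [Afun_eq_choose_mul b c hki, Ainv, ← Nat.choose_symm_add, Nat.cast_add_choose,
    show c - 1 + (k - v) = c + k - v - 1 by omega]
  field_simp

theorem sum_Afun_mul_Ainv (hc : 0 < c) {a i v : ℕ} (hia : i ≤ a) :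
    ∑ k ∈ Icc v a, Afun b c i k * Ainv b c k v = if v = i then 1 else 0 := by
  rcases lt_or_ge i v with hiv | hvi
  · rw [if_neg (by omega)]
    refine sum_eq_zero fun k hk => ?_
    rw [Afun_of_lt b c (by simp only [mem_Icc] at hk; omega), zero_mul]
  calc ∑ k ∈ Icc v a, Afun b c i k * Ainv b c k v
      = ∑ k ∈ Icc v i, Afun b c i k * Ainv b c k v := by
        refine (sum_subset (Icc_subset_Icc_right hia) fun k hk hki => ?_).symm
        rw [Afun_of_lt b c (by simp only [mem_Icc] at hk hki; omega), zero_mul]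
    _ = ∑ j ∈ range (i - v + 1), Afun b c i (j + v) * Ainv b c (j + v) v := by
        rw [range_eq_Ico, sum_Ico_add' (fun k => Afun b c i k * Ainv b c k v), zero_add,
          show i - v + 1 + v = i + 1 by omega, Ico_add_one_right_eq_Icc]
    _ = ((i - 1)! * (b + v - 1)! / ((b + i - 1)! * (v - 1)!) : ℚ) *
          ∑ j ∈ range (i - v + 1),
            (-1) ^ j * ((c - 1 + j).choose j : ℚ) * ((c - 1 + 1).choose (i - v - j) : ℚ) := by
        rw [mul_sum, Nat.sub_add_cancel hc]
        refine sum_congr rfl fun j hj => ?_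
        rw [Afun_mul_Ainv hc (by omega) (by simp only [mem_range] at hj; omega), Nat.add_sub_cancel,
          show i - (j + v) = i - v - j by omega]
    _ = if v = i then 1 else 0 := by
        rw [sum_range_neg_one_pow_mul_add_choose_mul_choose]
        by_cases hiv : v = i
        · subst hiv
          rw [if_pos (by omega), if_pos rfl]
          field_simp
        · rw [if_neg (by omega), if_neg hiv, mul_zero]

theorem sum_Afun_mul_sum_Ainv (hc : 0 < c) (f : ℕ → ℚ) {a i : ℕ} (hi : 1 ≤ i)
    (hia : i ≤ a) :
    ∑ k ∈ Icc 1 a, Afun b c i k * ∑ v ∈ Icc 1 k, Ainv b c k v * f v = f i := by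
  simp_rw [mul_sum]
  rw [sum_comm' (t' := Icc 1 a) (s' := fun v => Icc v a)
    (by intros; simp only [mem_Icc]; omega)]
  simp_rw [← mul_assoc, ← sum_mul, sum_Afun_mul_Ainv hc hia, ite_mul, one_mul, zero_mul]
  rw [sum_ite_eq', if_pos (by simp only [mem_Icc]; omega)]

theorem sum_Afun_mul_Dfun (hc : 0 < c) (n m : ℤ) {a i : ℕ} (hi : 1 ≤ i) (hia : i ≤ a) :
    ∑ k ∈ Icc 1 a, Afun b c i k * Dfun b c n m k = ibinom n (m - i) :=
  sum_Afun_mul_sum_Ainv hc (fun v => ibinom n (m - v)) hi hia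

theorem Bfun_eq_sum_Ainv_div (n' m' : ℤ) (j : ℕ) :
    Bfun b c n' m' j = (∑ v ∈ Icc 1 j, Ainv c b j v * ibinom n' (v - m')) / Cfun b c j j := by
  rw [Bfun, sum_div]
  refine sum_congr rfl fun v _ => ?_
  rw [Ainv, Cfun_self]
  field_simp

theorem sum_Bfun_mul_Cfun (hb : 0 < b) (n' m' : ℤ) {a j : ℕ} (hj : 1 ≤ j) (hja : j ≤ a) :
    ∑ k ∈ Icc 1 a, Bfun b c n' m' k * Cfun b c k j = ibinom n' (j - m') := by
  calc ∑ k ∈ Icc 1 a, Bfun b c n' m' k * Cfun b c k j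
      = ∑ k ∈ Icc 1 a, Afun c b j k * ∑ v ∈ Icc 1 k, Ainv c b k v * ibinom n' (v - m') := by
        refine sum_congr rfl fun k _ => ?_
        rw [Bfun_eq_sum_Ainv_div, Cfun_eq_Cfun_self_mul_Afun b c k j]
        field_simp [Cfun_self_ne_zero]
    _ = ibinom n' (j - m') := sum_Afun_mul_sum_Ainv hb (fun v => ibinom n' (v - m')) hj hja

theorem sum_Ainv_mul_choose (hc : 0 < c) (f : ℕ → ℚ) {t : ℕ} (ht : 1 ≤ t) :
    (∑ v ∈ Icc 1 t, Ainv b c t v * f v) * ((b + t - 1).choose (t - 1) : ℚ) =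
      ∑ s ∈ Icc 1 t, (-1) ^ (t - s) * ((b + s - 1).choose (s - 1) : ℚ) *
        ((c + t - s - 1).choose (c - 1) : ℚ) * f s := by
  rw [sum_mul]
  refine sum_congr rfl fun s hs => ?_
  simp only [mem_Icc] at hs
  rw [Ainv, Nat.cast_choose ℚ (by omega : s - 1 ≤ b + s - 1),
    Nat.cast_choose ℚ (by omega : c - 1 ≤ c + t - s - 1),
    Nat.cast_choose ℚ (by omega : t - 1 ≤ b + t - 1), show b + s - 1 - (s - 1) = b by omega,
    show c + t - s - 1 - (c - 1) = t - s by omega, show b + t - 1 - (t - 1) = b by omega]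
  field_simp

theorem Cfun_self_mul_choose {t : ℕ} (ht : 1 ≤ t) :
    Cfun b c t t * ((c + t - 1).choose (t - 1) : ℚ) =
      ((b + c + t - 1).choose (b + t - 1) : ℚ) := by
  rw [Cfun_self, Nat.cast_choose ℚ (by omega : t - 1 ≤ c + t - 1),
    Nat.cast_choose ℚ (by omega : b + t - 1 ≤ b + c + t - 1),
    show c + t - 1 - (t - 1) = c by omega, show b + c + t - 1 - (b + t - 1) = c by omega]
  field_simp

theorem Bfun_mul_Dfun (hb : 0 < b) (hc : 0 < c) (n m n' m' : ℤ) {t : ℕ} (ht : 1 ≤ t) :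
    Bfun b c n' m' t * Dfun b c n m t =
      Gfun b c n m t * Hfun b c n' m' t /
        (((b + c + t - 1).choose (b + t - 1) : ℚ) * ((b + t - 1).choose (t - 1) : ℚ)) := by
  have hG : Gfun b c n m t = Dfun b c n m t * ((b + t - 1).choose (t - 1) : ℚ) :=
    (sum_Ainv_mul_choose hc _ ht).symm
  have hH : Hfun b c n' m' t = (∑ v ∈ Icc 1 t, Ainv c b t v * ibinom n' (v - m')) *
      ((c + t - 1).choose (t - 1) : ℚ) :=
    (sum_Ainv_mul_choose hb _ ht).symm
  have h₁ : ((b + t - 1).choose (t - 1) : ℚ) ≠ 0 := by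
    exact_mod_cast (Nat.choose_pos (by omega)).ne'
  have h₂ : ((c + t - 1).choose (t - 1) : ℚ) ≠ 0 := by
    exact_mod_cast (Nat.choose_pos (by omega)).ne'
  rw [hG, hH, Bfun_eq_sum_Ainv_div, ← Cfun_self_mul_choose ht]
  field_simp [Cfun_self_ne_zero]

end LU

theorem macmahon_eq_prod_Cfun_self (a b c : ℕ) :
    macmahon a b c = ∏ i ∈ Icc 1 a, Cfun b c i i := by
  refine prod_congr rfl fun i hi => ?_
  simp only [mem_Icc] at hi
  have hinner : ∀ j ∈ Icc 1 b,
      ∏ k ∈ Icc 1 c, ((i : ℚ) + j + k - 1) / ((i : ℚ) + j + k - 2) =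
      ((i + j + c - 1 : ℕ) : ℚ) / ((i + j - 1 : ℕ) : ℚ) := by
    intro j hj
    simp only [mem_Icc] at hj
    refine (prod_congr rfl fun k hk => ?_).trans
      (prod_Icc_div_pred_eq (fun k => ((i + j + k - 1 : ℕ) : ℚ))
        (fun k => Nat.cast_ne_zero.mpr (by omega)) c)
    simp only [mem_Icc] at hk
    rw [show i + j + (k - 1) - 1 = i + j + k - 2 by omega,
      Nat.cast_sub (by omega : 1 ≤ i + j + k),
      Nat.cast_sub (by omega : 2 ≤ i + j + k)]
    push_cast
    ring
  refine (prod_congr rfl hinner).trans ((prod_congr rfl fun j hj => ?_).trans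
    ((prod_Icc_div_pred_eq (fun j => ((i + j + c - 1)! / (i + j - 1)! : ℚ))
      (fun j => by positivity) b).trans ?_))
  · simp only [mem_Icc] at hj
    rw [show i + j + c - 1 = i + (j - 1) + c - 1 + 1 by omega,
      show i + j - 1 = i + (j - 1) - 1 + 1 by omega, Nat.factorial_succ, Nat.factorial_succ]
    push_cast
    field_simp
  · rw [Cfun_self, add_zero, show i + b + c - 1 = b + c + i - 1 by omega,
      show i + b - 1 = b + i - 1 by omega, show i + c - 1 = c + i - 1 by omega]
    field_simp

theorem statement_15_general (a b c : ℕ) (hb : 0 < b) (hc : 0 < c) (m n m' n' : ℤ) :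
    (Matrix.of fun i j : Fin (a + 1) =>
      if (i : ℕ) < a then
        if (j : ℕ) < a then ibinom ((b : ℤ) + c) ((c : ℤ) + ((j : ℕ) + 1) - ((i : ℕ) + 1))
        else ibinom n (m - ((i : ℕ) + 1))
      else
        if (j : ℕ) < a then ibinom n' ((((j : ℕ) : ℤ) + 1) - m')
        else ibinom (n + n' - b - c) (m - m' - c)).det
    = macmahon a b c *
        (ibinom (n + n' - b - c) (m - m' - c)
          - ∑ t ∈ Finset.Icc 1 a,
              Gfun b c n m t * Hfun b c n' m' t /
                (((b + c + t - 1).choose (b + t - 1) : ℚ) *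
                  ((b + t - 1).choose (t - 1) : ℚ))) := by
  set X := ibinom (n + n' - b - c) (m - m' - c) -
    ∑ t ∈ Icc 1 a, Bfun b c n' m' t * Dfun b c n m t with hX
  convert_to (borderedMatrix a (Afun b c) 0 (Bfun b c n' m') 1 *
    borderedMatrix a (Cfun b c) (Dfun b c n m) 0 X).det = _ using 2
  · rw [borderedMatrix_mul_borderedMatrix]
    ext i j
    simp only [borderedMatrix, Matrix.of_apply]
    split_ifs
    · rw [sum_Afun_mul_Cfun (by omega) (by omega) (by omega)]
      push_cast
      rfl
    · rw [sum_Afun_mul_Dfun hc n m (by omega) (by omega)]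
      push_cast
      rfl
    · rw [sum_Bfun_mul_Cfun hb n' m' (by omega) (by omega)]
      push_cast
      rfl
    · rw [hX]
      ring
  rw [Matrix.det_mul,
    det_borderedMatrix_lower a _ _ (fun _ _ h => Afun_of_lt b c h) (Afun_self b c),
    det_borderedMatrix_upper a _ _ _ (fun _ _ h => Cfun_of_lt b c h), one_mul,
    macmahon_eq_prod_Cfun_self, hX]
  congr 2
  exact sum_congr rfl fun t ht => Bfun_mul_Dfun hb hc n m n' m' (mem_Icc.mp ht).1

/-- the computational content of the paper's main theorem
(Theorem 5.2): the determinant of the lattice path matrix equals MacMahon's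
product times the entry of the (candidate) inverse Kasteleyn matrix. -/
theorem statement_15 (a b c : ℕ) (ha : 0 < a) (hb : 0 < b) (hc : 0 < c) (m n m' n' : ℤ) :
    (Matrix.of fun i j : Fin (a + 1) =>
      if (i : ℕ) < a then
        if (j : ℕ) < a then ibinom ((b : ℤ) + c) ((c : ℤ) + ((j : ℕ) + 1) - ((i : ℕ) + 1))
        else ibinom n (m - ((i : ℕ) + 1))
      else
        if (j : ℕ) < a then ibinom n' ((((j : ℕ) : ℤ) + 1) - m')
        else ibinom (n + n' - b - c) (m - m' - c)).det
    = macmahon a b c *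
        (ibinom (n + n' - b - c) (m - m' - c)
          - ∑ t ∈ Finset.Icc 1 a,
              Gfun b c n m t * Hfun b c n' m' t /
                (((b + c + t - 1).choose (b + t - 1) : ℚ) *
                  ((b + t - 1).choose (t - 1) : ℚ))) :=
  statement_15_general a b c hb hc m n m' n'
end
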